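/- arXiv:1501.06164 — 3 statements merged into one kernel-verified Lean document; each statement's English description precedes it below -/
import Mathlib

section
/- Let E ⊆ ℝⁿ be measurable with finite measure, K a compact metric space, and v_m, v : E → K measurable. If for every continuous Φ : E × K → ℝ with ∫_E max_{X∈K}|Φ(x,X)|dx < ∞ one has ∫_E Φ(x, v_m(x)) dx → ∫_E Φ(x, v(x)) dx, then v_m → v in measure on E; in particular a subsequence converges to v almost everywhere. -/
/-! Testing against `Φ x X = dist X (v x)`, whose supremum over `X` is at most `diam K`, gives
`∫_E dist (v_m x) (v x) dx → 0`; Markov's inequality turns this into convergence in measure,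
and convergence in measure always has an a.e. convergent subsequence. -/

open MeasureTheory Filter Topology

section InMeasure

variable {α ι E : Type*} {m : MeasurableSpace α} {μ : Measure α} {l : Filter ι}
  {f : ι → α → E} {g : α → E}

theorem tendstoInMeasure_of_tendsto_lintegral_edist [EDist E]
    (hf : ∀ i, AEMeasurable (fun x => edist (f i x) (g x)) μ)
    (h : Tendsto (fun i => ∫⁻ x, edist (f i x) (g x) ∂μ) l (𝓝 0)) :
    TendstoInMeasure μ f l g := by
  refine tendstoInMeasure_of_ne_top fun ε hε hε_top => ?_
  -- Markov: `μ {ε ≤ edist (f i) g} ≤ (∫⁻ edist (f i) g) / ε`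
  have hbound : Tendsto (fun i => (∫⁻ x, edist (f i x) (g x) ∂μ) / ε) l (𝓝 0) := by
    simpa using ENNReal.Tendsto.div_const h (Or.inr hε.ne')
  exact tendsto_of_tendsto_of_tendsto_of_le_of_le tendsto_const_nhds hbound
    (fun _ => zero_le) fun i => meas_ge_le_lintegral_div (hf i) hε.ne' hε_top

theorem tendstoInMeasure_of_tendsto_integral_dist [PseudoMetricSpace E]
    (hf : ∀ i, Integrable (fun x => dist (f i x) (g x)) μ)
    (h : Tendsto (fun i => ∫ x, dist (f i x) (g x) ∂μ) l (𝓝 0)) :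
    TendstoInMeasure μ f l g := by
  refine tendstoInMeasure_of_tendsto_lintegral_edist
    (fun i => by simpa only [edist_dist] using (hf i).aemeasurable.ennreal_ofReal) ?_
  have hlint : ∀ i, ∫⁻ x, edist (f i x) (g x) ∂μ = ENNReal.ofReal (∫ x, dist (f i x) (g x) ∂μ) :=
    fun i => by
      simp only [edist_dist]
      exact (ofReal_integral_eq_lintegral_ofReal (hf i) (ae_of_all _ fun _ => dist_nonneg)).symm
  simpa only [hlint, ENNReal.ofReal_zero] using ENNReal.tendsto_ofReal h

end InMeasure

section CompactTarget

variable {α K : Type*} {m : MeasurableSpace α} {μ : Measure α} [MetricSpace K] [CompactSpace K]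

theorem continuous_iSup_abs_dist : Continuous fun y : K => ⨆ X : K, |dist X y| := by
  have h := isCompact_univ.continuous_sSup (f := fun (y X : K) => |dist X y|) (by fun_prop)
  simp_rw [Set.image_univ] at h
  exact h

theorem dist_le_diam_univ_of_compactSpace (x y : K) : dist x y ≤ Metric.diam (Set.univ : Set K) :=
  Metric.dist_le_diam_of_mem isCompact_univ.isBounded trivial trivial

theorem iSup_abs_dist_le_diam (y : K) : ⨆ X : K, |dist X y| ≤ Metric.diam (Set.univ : Set K) :=
  Real.iSup_le (fun X => (abs_of_nonneg dist_nonneg).trans_le <|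
    dist_le_diam_univ_of_compactSpace X y) Metric.diam_nonneg

variable [MeasurableSpace K] [BorelSpace K] [IsFiniteMeasure μ] {u w : α → K}

theorem integrable_dist_of_compactSpace (hu : Measurable u) (hw : Measurable w) :
    Integrable (fun x => dist (u x) (w x)) μ :=
  Integrable.of_bound (hu.dist hw).aestronglyMeasurable (Metric.diam (Set.univ : Set K))
    (ae_of_all _ fun x => by
      rw [Real.norm_of_nonneg dist_nonneg]
      exact dist_le_diam_univ_of_compactSpace (u x) (w x))

theorem integrable_iSup_abs_dist_of_compactSpace (hw : Measurable w) :
    Integrable (fun x => ⨆ X : K, |dist X (w x)|) μ :=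
  Integrable.of_bound (continuous_iSup_abs_dist.measurable.comp hw).aestronglyMeasurable
    (Metric.diam (Set.univ : Set K)) (ae_of_all _ fun x => by
      rw [Real.norm_of_nonneg (Real.iSup_nonneg fun _ => abs_nonneg _)]
      exact iSup_abs_dist_le_diam (w x))

end CompactTarget

theorem stmt1_general {n : ℕ} (E : Set (EuclideanSpace ℝ (Fin n)))
    (hEfin : volume E < ⊤)
    {K : Type*} [MetricSpace K] [CompactSpace K] [MeasurableSpace K] [BorelSpace K]
    (v : ℕ → EuclideanSpace ℝ (Fin n) → K) (vlim : EuclideanSpace ℝ (Fin n) → K)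
    (hv : ∀ m, Measurable (v m)) (hvlim : Measurable vlim)
    (hconv : ∀ Φ : EuclideanSpace ℝ (Fin n) → K → ℝ,
      (∀ X : K, Measurable fun x => Φ x X) →
      (∀ᵐ x ∂(volume.restrict E), Continuous fun X => Φ x X) →
      Integrable (fun x => ⨆ X : K, |Φ x X|) (volume.restrict E) →
      Tendsto (fun m => ∫ x, Φ x (v m x) ∂(volume.restrict E)) atTop
        (𝓝 (∫ x, Φ x (vlim x) ∂(volume.restrict E)))) :
    TendstoInMeasure (volume.restrict E) v atTop vlim ∧
      ∃ ns : ℕ → ℕ, StrictMono ns ∧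
        ∀ᵐ x ∂(volume.restrict E), Tendsto (fun k => v (ns k) x) atTop (𝓝 (vlim x)) := by
  have : IsFiniteMeasure (volume.restrict E) := isFiniteMeasure_restrict.mpr hEfin.ne
  have hL1 : Tendsto (fun m => ∫ x, dist (v m x) (vlim x) ∂(volume.restrict E)) atTop (𝓝 0) := by
    simpa using hconv (fun x X => dist X (vlim x)) (fun _ => measurable_const.dist hvlim)
      (ae_of_all _ fun _ => continuous_id.dist continuous_const)
      (integrable_iSup_abs_dist_of_compactSpace hvlim)
  have hmeas := tendstoInMeasure_of_tendsto_integral_dist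
    (fun m => integrable_dist_of_compactSpace (hv m) hvlim) hL1
  exact ⟨hmeas, hmeas.exists_seq_tendsto_ae⟩

/-- If integrals of every Carathéodory test function against v_m converge to the
corresponding integral against v, then v_m → v in measure, and a subsequence
converges almost everywhere. -/
theorem stmt1 {n : ℕ} (E : Set (EuclideanSpace ℝ (Fin n))) (hE : MeasurableSet E)
    (hEfin : volume E < ⊤)
    {K : Type*} [MetricSpace K] [CompactSpace K] [MeasurableSpace K] [BorelSpace K]
    (v : ℕ → EuclideanSpace ℝ (Fin n) → K) (vlim : EuclideanSpace ℝ (Fin n) → K)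
    (hv : ∀ m, Measurable (v m)) (hvlim : Measurable vlim)
    (hconv : ∀ Φ : EuclideanSpace ℝ (Fin n) → K → ℝ,
      (∀ X : K, Measurable fun x => Φ x X) →
      (∀ᵐ x ∂(volume.restrict E), Continuous fun X => Φ x X) →
      Integrable (fun x => ⨆ X : K, |Φ x X|) (volume.restrict E) →
      Tendsto (fun m => ∫ x, Φ x (v m x) ∂(volume.restrict E)) atTop
        (𝓝 (∫ x, Φ x (vlim x) ∂(volume.restrict E)))) :
    TendstoInMeasure (volume.restrict E) v atTop vlim ∧
      ∃ ns : ℕ → ℕ, StrictMono ns ∧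
        ∀ᵐ x ∂(volume.restrict E), Tendsto (fun k => v (ns k) x) atTop (𝓝 (vlim x)) :=
  stmt1_general E hEfin v vlim hv hvlim hconv
end

section
/- Let B¹,...,Bᴺ ∈ ℝ_s^{N×N} and A¹,...,Aᴺ ∈ ℝ_s^{n×n} be positive semidefinite with the ranges Σ^γ := range(B^γ) mutually orthogonal in ℝᴺ, and set T^γ := range(A^γ). Define A_{αiβj} := Σ_γ B^γ_{αβ} A^γ_{ij} viewed as a linear map ℝ^{N×n} → ℝ^{N×n}, (A:Q)_{αi} = Σ_{β,j} A_{αiβj} Q_{βj}. Then the range of this linear map equals the orthogonal direct sum ⊕_γ (Σ^γ ⊗ T^γ) ⊆ ℝ^{N×n}. -/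
/-!
The map is `Q ↦ ∑ γ, B^γ Q (A^γ)ᵀ`, and each summand sends a matrix unit `e_β e_jᵀ` to the outer
product of a column of `B^γ` with a column of `A^γ`, which gives `⊆`. Conversely, symmetry of
`B^δ` and orthogonality of the ranges make `B^δ` vanish on `range B^γ` for `δ ≠ γ`, so the map
sends `(B^γ x) yᵀ` to `(B^γ B^γ x)(A^γ y)ᵀ`; and `range (B^γ)² = range B^γ` since `BᵀB` and `B`
have the same rank.
-/

open Matrix

namespace Matrix

variable {R ι l m n k : Type*} [Fintype ι] [Fintype m] [Fintype n]

section CommSemiring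

variable [CommSemiring R]

/-- The paper's `U ⊗ V`. -/
def outerProductSpan (U : Submodule R (m → R)) (V : Submodule R (n → R)) :
    Submodule R (Matrix m n R) :=
  Submodule.span R {M | ∃ η a, η ∈ U ∧ a ∈ V ∧ M = vecMulVec η a}

theorem mul_vecMulVec_mul_transpose (B : Matrix l m R) (C : Matrix k n R) (x : m → R)
    (y : n → R) : B * vecMulVec x y * Cᵀ = vecMulVec (B *ᵥ x) (C *ᵥ y) := by
  rw [mul_vecMulVec, vecMulVec_mul, vecMul_transpose]

theorem mul_mul_transpose_mem_outerProductSpan [DecidableEq m] [DecidableEq n]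
    (B : Matrix l m R) (C : Matrix k n R) (Q : Matrix m n R) :
    B * Q * Cᵀ ∈ outerProductSpan (LinearMap.range B.mulVecLin)
      (LinearMap.range C.mulVecLin) := by
  rw [matrix_eq_sum_single Q]
  simp only [Matrix.mul_sum, Matrix.sum_mul]
  refine Submodule.sum_mem _ fun β _ => Submodule.sum_mem _ fun j _ => ?_
  rw [← mul_one (Q β j), ← smul_eq_mul, ← smul_single, single_eq_single_vecMulVec_single,
    Matrix.mul_smul, Matrix.smul_mul, mul_vecMulVec_mul_transpose]
  exact Submodule.smul_mem _ _ <| Submodule.subset_span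
    ⟨_, _, LinearMap.mem_range_self _ _, LinearMap.mem_range_self _ _, rfl⟩

/-- `Q ↦ A : Q` for the tensor `A_{αiβj} = ∑ γ, B^γ_{αβ} A^γ_{ij}`. -/
def sumMulMulTranspose (B : ι → Matrix m m R) (A : ι → Matrix n n R) :
    Matrix m n R →ₗ[R] Matrix m n R where
  toFun Q := ∑ γ, B γ * Q * (A γ)ᵀ
  map_add' Q Q' := by simp only [Matrix.mul_add, Matrix.add_mul, Finset.sum_add_distrib]
  map_smul' c Q := by simp only [Matrix.mul_smul, Matrix.smul_mul, Finset.smul_sum,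
    RingHom.id_apply]

theorem sumMulMulTranspose_apply (B : ι → Matrix m m R) (A : ι → Matrix n n R)
    (Q : Matrix m n R) (α : m) (i : n) :
    sumMulMulTranspose B A Q α i = ∑ β, ∑ j, (∑ γ, B γ α β * A γ i j) * Q β j := by
  simp only [sumMulMulTranspose, LinearMap.coe_mk, AddHom.coe_mk, sum_apply, mul_apply,
    transpose_apply, Finset.sum_mul]
  rw [Finset.sum_comm]
  conv_rhs => rw [Finset.sum_comm]
  refine Finset.sum_congr rfl fun j _ => ?_
  rw [Finset.sum_comm]
  exact Finset.sum_congr rfl fun β _ => Finset.sum_congr rfl fun γ _ => mul_right_comm _ _ _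

end CommSemiring

section LinearOrderedCommRing

variable [CommRing R] [LinearOrder R] [IsStrictOrderedRing R]

theorem mulVec_eq_zero_of_mem_range_of_dotProduct_eq_zero {B C : Matrix m m R}
    (hC : C.IsSymm)
    (horth : ∀ x ∈ LinearMap.range B.mulVecLin, ∀ y ∈ LinearMap.range C.mulVecLin, x ⬝ᵥ y = 0)
    {v : m → R} (hv : v ∈ LinearMap.range B.mulVecLin) : C *ᵥ v = 0 := by
  have h := horth v hv _ (LinearMap.mem_range_self C.mulVecLin (C *ᵥ v))
  rwa [mulVecLin_apply, dotProduct_mulVec, ← mulVec_transpose, hC.eq,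
    dotProduct_self_eq_zero] at h

end LinearOrderedCommRing

section LinearOrderedField

variable [Field R] [LinearOrder R] [IsStrictOrderedRing R]

theorem range_mulVecLin_mul_self {B : Matrix m m R} (hB : B.IsSymm) :
    LinearMap.range (B * B).mulVecLin = LinearMap.range B.mulVecLin := by
  refine Submodule.eq_of_le_of_finrank_eq ?_ ?_
  · rw [mulVecLin_mul]
    exact LinearMap.range_comp_le_range _ _
  · have h := rank_transpose_mul_self B
    rwa [hB.eq] at h

theorem range_sumMulMulTranspose [DecidableEq m] [DecidableEq n]
    {B : ι → Matrix m m R} (A : ι → Matrix n n R) (hB : ∀ γ, (B γ).IsSymm)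
    (horth : Pairwise fun γ δ => ∀ x ∈ LinearMap.range (B γ).mulVecLin,
      ∀ y ∈ LinearMap.range (B δ).mulVecLin, x ⬝ᵥ y = 0) :
    LinearMap.range (sumMulMulTranspose B A) = ⨆ γ,
      outerProductSpan (LinearMap.range (B γ).mulVecLin) (LinearMap.range (A γ).mulVecLin) := by
  refine le_antisymm ?_ (iSup_le fun γ => Submodule.span_le.mpr ?_)
  · rintro _ ⟨Q, rfl⟩
    exact Submodule.sum_mem _ fun γ _ => Submodule.mem_iSup_of_mem γ
      (mul_mul_transpose_mem_outerProductSpan _ _ Q)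
  · rintro _ ⟨η, a, hη, ⟨y, rfl⟩, rfl⟩
    rw [← range_mulVecLin_mul_self (hB γ)] at hη
    obtain ⟨x, rfl⟩ := hη
    refine ⟨vecMulVec (B γ *ᵥ x) y, ?_⟩
    have hcross : ∀ δ ≠ γ, B δ *ᵥ (B γ *ᵥ x) = 0 := fun δ hδ =>
      mulVec_eq_zero_of_mem_range_of_dotProduct_eq_zero (hB δ) (horth hδ.symm)
        (LinearMap.mem_range_self _ x)
    change ∑ δ, B δ * vecMulVec (B γ *ᵥ x) y * (A δ)ᵀ = _
    simp only [mul_vecMulVec_mul_transpose]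
    rw [Finset.sum_eq_single γ (fun δ _ hδ => by rw [hcross δ hδ, zero_vecMulVec])
      (by simp), mulVecLin_apply, mulVecLin_apply, mulVec_mulVec]

end LinearOrderedField

end Matrix

theorem stmt8_general {N n : ℕ} (B : Fin N → Matrix (Fin N) (Fin N) ℝ)
    (A : Fin N → Matrix (Fin n) (Fin n) ℝ)
    (hB : ∀ γ, (B γ).PosSemidef)
    (horth : ∀ γ δ, γ ≠ δ →
      ∀ x ∈ LinearMap.range (B γ).mulVecLin, ∀ y ∈ LinearMap.range (B δ).mulVecLin,
        dotProduct x y = 0)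
    (L : Matrix (Fin N) (Fin n) ℝ → Matrix (Fin N) (Fin n) ℝ)
    (hL : ∀ Q, L Q = Matrix.of fun α i => ∑ β, ∑ j, (∑ γ, B γ α β * A γ i j) * Q β j) :
    Set.range L = ↑(⨆ γ : Fin N, Submodule.span ℝ
      {M : Matrix (Fin N) (Fin n) ℝ | ∃ η a, η ∈ LinearMap.range (B γ).mulVecLin ∧
        a ∈ LinearMap.range (A γ).mulVecLin ∧ M = Matrix.of fun α i => η α * a i}) := by
  have hL' : L = sumMulMulTranspose B A := funext fun Q => by
    ext α i
    rw [hL, of_apply, sumMulMulTranspose_apply]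
  rw [hL', ← LinearMap.coe_range,
    range_sumMulMulTranspose A (fun γ => isHermitian_iff_isSymm.mp (hB γ).1) horth]
  rfl

/-- Claim 40: the range of the linear map Q ↦ A : Q determined by a decomposable
tensor A_{αiβj} = Σ_γ B^γ_{αβ} A^γ_{ij} equals the (orthogonal direct) sum of the
subspaces Σ^γ ⊗ T^γ, where Σ^γ = range B^γ and T^γ = range A^γ. -/
theorem stmt8 {N n : ℕ} (B : Fin N → Matrix (Fin N) (Fin N) ℝ)
    (A : Fin N → Matrix (Fin n) (Fin n) ℝ)
    (hB : ∀ γ, (B γ).PosSemidef) (hA : ∀ γ, (A γ).PosSemidef)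
    (horth : ∀ γ δ, γ ≠ δ →
      ∀ x ∈ LinearMap.range (B γ).mulVecLin, ∀ y ∈ LinearMap.range (B δ).mulVecLin,
        dotProduct x y = 0)
    (L : Matrix (Fin N) (Fin n) ℝ → Matrix (Fin N) (Fin n) ℝ)
    (hL : ∀ Q, L Q = Matrix.of fun α i => ∑ β, ∑ j, (∑ γ, B γ α β * A γ i j) * Q β j) :
    Set.range L = ↑(⨆ γ : Fin N, Submodule.span ℝ
      {M : Matrix (Fin N) (Fin n) ℝ | ∃ η a, η ∈ LinearMap.range (B γ).mulVecLin ∧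
        a ∈ LinearMap.range (A γ).mulVecLin ∧ M = Matrix.of fun α i => η α * a i}) :=
  stmt8_general B A hB horth L hL
end

section
/- Let 𝔛 be a nonempty set, (X, ‖·‖) a Banach space, and F, A : 𝔛 → X maps satisfying ‖F(u) − F(v) − (A(u) − A(v))‖ ≤ K ‖A(u) − A(v)‖ for some K ∈ (0,1) and all u, v ∈ 𝔛. If A is a bijection from 𝔛 onto X, then F is also a bijection from 𝔛 onto X. -/
/-!
Transport F to X along the bijection A: `G := F ∘ A⁻¹` satisfies
`‖(w - G w) - (w' - G w')‖ ≤ K ‖w - w'‖`, so for every target `f` the map `w ↦ w - G w + f`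
is a contraction of the complete space X, and its fixed point solves `G w = f`.
Injectivity is immediate: `F u = F v` turns the nearness inequality into
`‖A u - A v‖ ≤ K ‖A u - A v‖`, which forces `A u = A v` since `K < 1`.
-/

open NNReal

section Near

variable {α E : Type*} [NormedAddCommGroup E]

theorem Function.Surjective.of_lipschitzWith_id_sub [CompleteSpace E] {G : E → E} {K : ℝ≥0}
    (hK : K < 1) (hG : LipschitzWith K fun w => w - G w) : Function.Surjective G := by
  intro f
  have hcontr : ContractingWith K fun w => w - G w + f :=
    ⟨hK, by simpa using hG.add (LipschitzWith.const f)⟩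
  obtain ⟨w, hw, -⟩ := hcontr.exists_fixedPoint 0 (edist_ne_top _ _)
  refine ⟨w, ?_⟩
  have hw : w - G w + f = w := hw
  rwa [sub_add_eq_add_sub, sub_eq_iff_eq_add, add_right_inj, eq_comm] at hw

theorem lipschitzWith_id_sub_comp_symm_of_near {F : α → E} (e : α ≃ E) {K : ℝ}
    (hnear : ∀ u v, ‖F u - F v - (e u - e v)‖ ≤ K * ‖e u - e v‖) :
    LipschitzWith K.toNNReal fun w => w - F (e.symm w) := by
  refine LipschitzWith.of_dist_le' fun w w' => ?_
  have h := hnear (e.symm w) (e.symm w')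
  simp only [Equiv.apply_symm_apply] at h
  calc dist (w - F (e.symm w)) (w' - F (e.symm w'))
      = ‖F (e.symm w) - F (e.symm w') - (w - w')‖ := by
        rw [dist_eq_norm, ← norm_neg]; congr 1; abel
    _ ≤ K * dist w w' := by rwa [dist_eq_norm]

theorem Function.Injective.of_near {F A : α → E} {K : ℝ} (hK : K < 1)
    (hnear : ∀ u v, ‖F u - F v - (A u - A v)‖ ≤ K * ‖A u - A v‖) (hA : Function.Injective A) :
    Function.Injective F := by
  intro u v huv
  have h := hnear u v
  rw [huv, sub_self, zero_sub, norm_neg] at h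
  have hAuv : ‖A u - A v‖ = 0 := by nlinarith [norm_nonneg (A u - A v)]
  exact hA (sub_eq_zero.mp (norm_eq_zero.mp hAuv))

theorem Function.Surjective.of_near [CompleteSpace E] {F A : α → E} {K : ℝ} (hK : K < 1)
    (hnear : ∀ u v, ‖F u - F v - (A u - A v)‖ ≤ K * ‖A u - A v‖) (hA : Function.Bijective A) :
    Function.Surjective F := by
  let e := Equiv.ofBijective A hA
  have hG := lipschitzWith_id_sub_comp_symm_of_near e hnear
  exact (Function.Surjective.of_lipschitzWith_id_sub (Real.toNNReal_lt_one.mpr hK) hG).of_comp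

end Near

theorem stmt12_general {𝔛 : Type*} {X : Type*} [NormedAddCommGroup X]
    [CompleteSpace X]
    (F A : 𝔛 → X) (K : ℝ) (hK1 : K < 1)
    (hnear : ∀ u v : 𝔛, ‖F u - F v - (A u - A v)‖ ≤ K * ‖A u - A v‖)
    (hA : Function.Bijective A) : Function.Bijective F :=
  ⟨.of_near hK1 hnear hA.injective, .of_near hK1 hnear hA⟩

/-- Campanato's theorem on near operators: if F is near the bijection A, i.e.
‖F u − F v − (A u − A v)‖ ≤ K ‖A u − A v‖ with 0 < K < 1, then F is a bijection. -/
theorem stmt12 {𝔛 : Type*} [Nonempty 𝔛] {X : Type*} [NormedAddCommGroup X]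
    [NormedSpace ℝ X] [CompleteSpace X]
    (F A : 𝔛 → X) (K : ℝ) (hK0 : 0 < K) (hK1 : K < 1)
    (hnear : ∀ u v : 𝔛, ‖F u - F v - (A u - A v)‖ ≤ K * ‖A u - A v‖)
    (hA : Function.Bijective A) : Function.Bijective F :=
  stmt12_general F A K hK1 hnear hA
end
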